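/- Let 0 < α < 1. Then ∫₀¹ x^{α-2}(-(1-x)^{-α}+(1+x)^{-α}) dx + ∫₀¹ x^{2α}((1-x)^{-α}+(1+x)^{-α}) dx < 0. -/

import Mathlib

open MeasureTheory intervalIntegral Set Filter Topology

/-!
The first integral is computed exactly: its integrand has the primitive
`x^(α-1) ((1-x)^(1-α) - (1+x)^(1-α)) / (1-α)`, which extends continuously to `[0,1]` (it vanishes
like `x^α` at `0`) and takes the value `-2^(1-α)/(1-α)` at `1`; the integrand has constant sign,
so its integrability comes for free. The second integral is strictly smaller than
`∫₀¹ ((1-x)^(-α) + (1+x)^(-α)) = ∫₀² x^(-α) = 2^(1-α)/(1-α)`, because `x^(2α) < 1` on `(0,1)`.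
-/

lemma hasDerivAt_rpow_mul_one_add_mul_rpow_neg {β s x : ℝ} (hx : 0 < x) (hsx : 0 < 1 + s * x) :
    HasDerivAt (fun y => y ^ β * (1 + s * y) ^ (-β))
      (β * x ^ (β - 1) * (1 + s * x) ^ (-β - 1)) x := by
  have hpow : HasDerivAt (fun y => y ^ β) (β * x ^ (β - 1)) x :=
    Real.hasDerivAt_rpow_const (Or.inl hx.ne')
  have hlin : HasDerivAt (fun y => (1 + s * y) ^ (-β)) (s * (-β) * (1 + s * x) ^ (-β - 1)) x := by
    simpa using ((hasDerivAt_id x).const_mul s |>.const_add 1).rpow_const (p := -β) (Or.inl hsx.ne')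
  refine (hpow.mul hlin).congr_deriv ?_
  rw [show x ^ β = x ^ (β - 1) * x by rw [← Real.rpow_add_one hx.ne', sub_add_cancel],
    show (1 + s * x) ^ (-β) = (1 + s * x) ^ (-β - 1) * (1 + s * x) by
      rw [← Real.rpow_add_one hsx.ne', sub_add_cancel]]
  ring

lemma tendsto_rpow_sub_one_mul_nhdsGT_zero {g : ℝ → ℝ} {d α : ℝ} (hg : HasDerivAt g d 0)
    (hg0 : g 0 = 0) (hα : 0 < α) :
    Tendsto (fun x => x ^ (α - 1) * g x) (𝓝[>] 0) (𝓝 0) := by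
  have hpow : Tendsto (fun x : ℝ => x ^ α) (𝓝[>] 0) (𝓝 0) := by
    simpa [Real.zero_rpow hα.ne'] using
      (Real.continuousAt_rpow_const 0 α (Or.inr hα.le)).tendsto.mono_left nhdsWithin_le_nhds
  have hslope : Tendsto (slope g 0) (𝓝[>] 0) (𝓝 d) :=
    (hasDerivAt_iff_tendsto_slope.mp hg).mono_left (nhdsWithin_mono _ fun _ hx => ne_of_gt hx)
  refine (zero_mul d ▸ hpow.mul hslope).congr' ?_
  filter_upwards [self_mem_nhdsWithin] with x (hx : 0 < x)
  rw [slope_def_field, hg0, Real.rpow_sub_one hx.ne', sub_zero, sub_zero]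
  ring

lemma intervalIntegrable_one_sub_rpow {r : ℝ} (hr : -1 < r) :
    IntervalIntegrable (fun x : ℝ => (1 - x) ^ r) volume 0 1 := by
  simpa using (intervalIntegrable_rpow' hr (a := 1) (b := 0)).comp_sub_left 1

lemma intervalIntegrable_one_add_rpow {r : ℝ} (hr : -1 < r) :
    IntervalIntegrable (fun x : ℝ => (1 + x) ^ r) volume 0 1 := by
  have h := (intervalIntegrable_rpow' hr (a := 1) (b := 2)).comp_add_left 1
  norm_num at h
  exact h

lemma integral_rpow_mul_lt_integral {f : ℝ → ℝ} {p : ℝ} (hp : 0 < p)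
    (hf : IntervalIntegrable f volume 0 1) (hpos : ∀ x ∈ Ioo (0 : ℝ) 1, 0 < f x) :
    ∫ x in (0 : ℝ)..1, x ^ p * f x < ∫ x in (0 : ℝ)..1, f x := by
  have hpf : IntervalIntegrable (fun x => x ^ p * f x) volume 0 1 :=
    hf.continuousOn_mul (continuousOn_id.rpow_const fun _ _ => Or.inr hp.le)
  rw [← sub_pos, ← integral_sub hf hpf]
  refine intervalIntegral_pos_of_pos_on (hf.sub hpf) (fun x hx => ?_) one_pos
  have hxp : x ^ p < 1 := Real.rpow_lt_one hx.1.le hx.2 hp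
  nlinarith [hpos x hx]

lemma integral_one_sub_rpow_add_one_add_rpow {α : ℝ} (hα : α < 1) :
    ∫ x in (0 : ℝ)..1, ((1 - x) ^ (-α) + (1 + x) ^ (-α)) = 2 ^ (1 - α) / (1 - α) := by
  have hr : (-1 : ℝ) < -α := by linarith
  rw [integral_add (intervalIntegrable_one_sub_rpow hr) (intervalIntegrable_one_add_rpow hr),
    integral_comp_sub_left (fun x => x ^ (-α)), integral_comp_add_left (fun x => x ^ (-α))]
  norm_num only
  rw [integral_add_adjacent_intervals (intervalIntegrable_rpow' hr) (intervalIntegrable_rpow' hr),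
    integral_rpow (Or.inl hr), Real.zero_rpow (by linarith), neg_add_eq_sub, sub_zero]

noncomputable def rpowDiffPrimitive (α x : ℝ) : ℝ :=
  x ^ (α - 1) * ((1 - x) ^ (1 - α) - (1 + x) ^ (1 - α)) / (1 - α)

section

variable {α : ℝ}

lemma hasDerivAt_rpowDiffPrimitive (hα : α ≠ 1) {x : ℝ} (hx : x ∈ Ioo (0 : ℝ) 1) :
    HasDerivAt (rpowDiffPrimitive α) (x ^ (α - 2) * (-(1 - x) ^ (-α) + (1 + x) ^ (-α))) x := by
  have hm := hasDerivAt_rpow_mul_one_add_mul_rpow_neg (β := α - 1) (s := -1) hx.1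
    (by linarith [hx.2])
  have hp := hasDerivAt_rpow_mul_one_add_mul_rpow_neg (β := α - 1) (s := 1) hx.1
    (by linarith [hx.1])
  simp only [neg_sub, show α - 1 - 1 = α - 2 by ring, show (1 : ℝ) - α - 1 = -α by ring,
    neg_one_mul, one_mul, ← sub_eq_add_neg] at hm hp
  have hF : rpowDiffPrimitive α =
      fun y => (y ^ (α - 1) * (1 - y) ^ (1 - α) - y ^ (α - 1) * (1 + y) ^ (1 - α)) / (1 - α) :=
    funext fun y => by rw [rpowDiffPrimitive, mul_sub]
  rw [hF]
  refine ((hm.sub hp).div_const (1 - α)).congr_deriv ?_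
  field_simp [sub_ne_zero.mpr hα.symm]
  ring

lemma rpowDiffPrimitive_zero : rpowDiffPrimitive α 0 = 0 := by
  simp [rpowDiffPrimitive]

lemma rpowDiffPrimitive_one (hα : α < 1) : rpowDiffPrimitive α 1 = -(2 ^ (1 - α) / (1 - α)) := by
  norm_num [rpowDiffPrimitive, Real.zero_rpow (sub_pos.mpr hα).ne', neg_div]

lemma continuousOn_rpowDiffPrimitive (hα₀ : 0 < α) (hα₁ : α < 1) :
    ContinuousOn (rpowDiffPrimitive α) (Icc 0 1) := by
  have hexp : 0 ≤ 1 - α := by linarith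
  intro x hx
  rcases hx.1.eq_or_lt with rfl | hx₀
  · have hg : HasDerivAt (fun y : ℝ => (1 - y) ^ (1 - α) - (1 + y) ^ (1 - α)) _ 0 :=
      ((hasDerivAt_id' 0).const_sub 1 |>.rpow_const (Or.inl (by norm_num))).sub
        ((hasDerivAt_id' 0).const_add 1 |>.rpow_const (Or.inl (by norm_num)))
    have hlim : Tendsto (rpowDiffPrimitive α) (𝓝[>] 0) (𝓝 (rpowDiffPrimitive α 0)) := by
      have h := (tendsto_rpow_sub_one_mul_nhdsGT_zero hg (by simp) hα₀).div_const (1 - α)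
      rw [zero_div] at h
      rw [rpowDiffPrimitive_zero]
      exact h
    exact (continuousWithinAt_Ioi_iff_Ici.mp hlim).mono Icc_subset_Ici_self
  · refine ContinuousAt.continuousWithinAt ?_
    exact ((Real.continuousAt_rpow_const _ _ (Or.inl hx₀.ne')).mul
      (((continuousAt_const.sub continuousAt_id).rpow_const (Or.inr hexp)).sub
        ((continuousAt_const.add continuousAt_id).rpow_const (Or.inr hexp)))).div_const _

lemma rpow_sub_two_mul_sub_nonpos (hα : 0 ≤ α) {x : ℝ} (hx : x ∈ Ioo (0 : ℝ) 1) :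
    x ^ (α - 2) * (-(1 - x) ^ (-α) + (1 + x) ^ (-α)) ≤ 0 := by
  have hmono : (1 + x) ^ (-α) ≤ (1 - x) ^ (-α) :=
    Real.rpow_le_rpow_of_nonpos (by linarith [hx.2]) (by linarith [hx.1]) (by linarith)
  exact mul_nonpos_of_nonneg_of_nonpos (Real.rpow_nonneg hx.1.le _) (by linarith)

lemma integral_rpow_sub_two_mul_sub (hα₀ : 0 < α) (hα₁ : α < 1) :
    ∫ x in (0 : ℝ)..1, x ^ (α - 2) * (-(1 - x) ^ (-α) + (1 + x) ^ (-α)) =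
      -(2 ^ (1 - α) / (1 - α)) := by
  have hF := continuousOn_rpowDiffPrimitive hα₀ hα₁
  have hF' := fun x hx => hasDerivAt_rpowDiffPrimitive hα₁.ne (x := x) hx
  have hint : IntervalIntegrable
      (fun x => x ^ (α - 2) * (-(1 - x) ^ (-α) + (1 + x) ^ (-α))) volume 0 1 := by
    have h := integrableOn_deriv_of_nonneg hF.neg (fun x hx => (hF' x hx).neg)
      fun x hx => neg_nonneg.mpr (rpow_sub_two_mul_sub_nonpos hα₀.le hx)
    rw [intervalIntegrable_iff_integrableOn_Ioc_of_le zero_le_one]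
    simpa only [Pi.neg_def, neg_neg] using h.neg
  rw [integral_eq_sub_of_hasDerivAt_of_le zero_le_one hF hF' hint, rpowDiffPrimitive_one hα₁,
    rpowDiffPrimitive_zero, sub_zero]

end

/-- For `0 < α < 1`,
`∫₀¹ x^{α-2}(-(1-x)^{-α}+(1+x)^{-α}) dx + ∫₀¹ x^{2α}((1-x)^{-α}+(1+x)^{-α}) dx < 0`. -/
theorem stmt_4 (α : ℝ) (hα0 : 0 < α) (hα1 : α < 1) :
    (∫ x in (0:ℝ)..1, x ^ (α - 2) * (-(1 - x) ^ (-α) + (1 + x) ^ (-α))) +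
      (∫ x in (0:ℝ)..1, x ^ (2 * α) * ((1 - x) ^ (-α) + (1 + x) ^ (-α))) < 0 := by
  have hr : (-1 : ℝ) < -α := by linarith
  have hsecond := integral_rpow_mul_lt_integral (by positivity : 0 < 2 * α)
    ((intervalIntegrable_one_sub_rpow hr).add (intervalIntegrable_one_add_rpow hr))
    fun x hx => add_pos (Real.rpow_pos_of_pos (by linarith [hx.2]) _)
      (Real.rpow_pos_of_pos (by linarith [hx.1]) _)
  rw [integral_one_sub_rpow_add_one_add_rpow hα1] at hsecond
  rw [integral_rpow_sub_two_mul_sub hα0 hα1]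
  linarith
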